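/- Orthogonality of distinct simple modes of the elliptic membrane: let c, λ, λ', R, R', ϑ be real numbers with ϑ > 0. Let P, P̃ : ℝ → ℝ be twice continuously differentiable 2π-periodic functions with P'' + (R − 2λ²c²·cos 2α)·P = 0 and P̃'' + (R' − 2λ'²c²·cos 2α)·P̃ = 0. Let Q, Q̃ : ℝ → ℝ be twice continuously differentiable functions on [0, ϑ] with Q'' − (R − 2λ²c²·cosh 2β)·Q = 0 and Q̃'' − (R' − 2λ'²c²·cosh 2β)·Q̃ = 0, with Q(ϑ) = Q̃(ϑ) = 0, and with either Q(0) = Q̃(0) = 0 or Q'(0) = Q̃'(0) = 0. If (λ², R) ≠ (λ'², R'), then ∫₀^{ϑ} ∫₀^{2π} (cosh 2β − cos 2α)·P(α)·P̃(α)·Q(β)·Q̃(β) dα dβ = 0. -/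

import Mathlib

/-!
Separating the variables, the double integral equals `A * D - B * C` with `A = ∫ P P̃`,
`B = ∫ cos 2α P P̃`, `C = ∫ Q Q̃`, `D = ∫ cosh 2β Q Q̃`. Integrating Lagrange's identity
`(u v' - u' v)' = u v'' - u'' v` over a period, respectively over `[0, ϑ]` where the boundary
conditions kill the Wronskian, gives `(R - R') A + (k' - k) B = 0 = (R - R') C + (k' - k) D`
with `k = 2λ²c²`, so the determinant `A * D - B * C` vanishes unless `R = R'` and `k = k'`.
In that case `c = 0`, and the energy identity `∫ u'² + s ∫ u² = [u' u]` for `u'' = s u` shows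
that `P` vanishes if `R < 0` and `Q` vanishes if `R ≥ 0`.
-/

open Real intervalIntegral Set

theorem Function.Periodic.deriv {f : ℝ → ℝ} {T : ℝ} (hf : Function.Periodic f T) :
    Function.Periodic (deriv f) T := fun x => by
  rw [← deriv_comp_add_const, funext hf]

noncomputable def wronskian (u v : ℝ → ℝ) (x : ℝ) : ℝ := u x * deriv v x - deriv u x * v x

theorem Function.Periodic.wronskian {u v : ℝ → ℝ} {T : ℝ} (hu : Function.Periodic u T)
    (hv : Function.Periodic v T) : Function.Periodic (wronskian u v) T := fun x => by
  simp only [_root_.wronskian, hu x, hv x, hu.deriv x, hv.deriv x]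

theorem mul_sub_mul_eq_zero_of_mul_add_mul_eq_zero {K : Type*} [CommRing K] [IsDomain K]
    {x y A B C D : K} (hAB : x * A + y * B = 0) (hCD : x * C + y * D = 0)
    (hxy : x ≠ 0 ∨ y ≠ 0) : A * D - B * C = 0 := by
  rcases hxy with hx | hy
  · refine (mul_eq_zero.mp ?_).resolve_left hx
    linear_combination D * hAB - B * hCD
  · refine (mul_eq_zero.mp ?_).resolve_left hy
    linear_combination A * hCD - C * hAB

theorem eqOn_zero_of_integral_sq_eq_zero {f : ℝ → ℝ} {a b : ℝ} (hab : a < b)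
    (hf : ContinuousOn f (Icc a b)) (h : ∫ x in a..b, f x ^ 2 = 0) :
    ∀ x ∈ Icc a b, f x = 0 := by
  intro x hx
  by_contra hfx
  exact (integral_pos hab (hf.pow 2) (fun y _ => sq_nonneg (f y))
    ⟨x, hx, sq_pos_of_ne_zero hfx⟩).ne' h

theorem integral_integral_sub_mul_mul {f g u v : ℝ → ℝ} {a b c d : ℝ}
    (hu : IntervalIntegrable u MeasureTheory.volume c d)
    (hfu : IntervalIntegrable (fun x => f x * u x) MeasureTheory.volume c d)
    (hv : IntervalIntegrable v MeasureTheory.volume a b)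
    (hgv : IntervalIntegrable (fun y => g y * v y) MeasureTheory.volume a b) :
    ∫ y in a..b, ∫ x in c..d, (g y - f x) * u x * v y =
      (∫ x in c..d, u x) * (∫ y in a..b, g y * v y) -
        (∫ x in c..d, f x * u x) * ∫ y in a..b, v y := by
  have hinner : ∀ y, ∫ x in c..d, (g y - f x) * u x * v y =
      (∫ x in c..d, u x) * (g y * v y) - (∫ x in c..d, f x * u x) * v y := fun y => by
    rw [← integral_mul_const, ← integral_mul_const,
      ← integral_sub (hu.mul_const _) (hfu.mul_const _)]
    exact integral_congr fun x _ => by ring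
  simp only [hinner]
  rw [integral_sub (hgv.const_mul _) (hv.const_mul _), integral_const_mul, integral_const_mul]

theorem integral_integral_eq_zero_of_forall_mem_Icc {F : ℝ → ℝ → ℝ} {a b c d : ℝ}
    (hab : a ≤ b) (hcd : c ≤ d) (hF : ∀ y ∈ Icc a b, ∀ x ∈ Icc c d, F y x = 0) :
    ∫ y in a..b, ∫ x in c..d, F y x = 0 := by
  have hIoc {s t : ℝ} (hst : s ≤ t) {x : ℝ} (hx : x ∈ uIoc s t) : x ∈ Icc s t :=
    Ioc_subset_Icc_self (by rwa [uIoc_of_le hst] at hx)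
  refine integral_zero_ae (MeasureTheory.ae_of_all _ fun y hy => ?_)
  exact integral_zero_ae
    (MeasureTheory.ae_of_all _ fun x hx => hF y (hIoc hab hy) x (hIoc hcd hx))

section SecondOrder

variable {u v : ℝ → ℝ} {a b : ℝ}

theorem hasDerivAt_wronskian (hu : ContDiff ℝ 2 u) (hv : ContDiff ℝ 2 v) (x : ℝ) :
    HasDerivAt (wronskian u v) (u x * deriv (deriv v) x - deriv (deriv u) x * v x) x := by
  have h := ((hu.differentiable two_ne_zero x).hasDerivAt.mul
    (hv.differentiable_deriv_two x).hasDerivAt).sub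
    ((hu.differentiable_deriv_two x).hasDerivAt.mul (hv.differentiable two_ne_zero x).hasDerivAt)
  exact h.congr_deriv (by ring)

theorem integral_sub_mul_mul_eq_wronskian_sub {p q : ℝ → ℝ} (hab : a ≤ b)
    (hu : ContDiff ℝ 2 u) (hv : ContDiff ℝ 2 v)
    (hpu : ∀ x ∈ Icc a b, deriv (deriv u) x + p x * u x = 0)
    (hqv : ∀ x ∈ Icc a b, deriv (deriv v) x + q x * v x = 0) :
    ∫ x in a..b, (p x - q x) * (u x * v x) = wronskian u v b - wronskian u v a := by
  have hcont : Continuous fun x => u x * deriv (deriv v) x - deriv (deriv u) x * v x := by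
    have huc := hu.continuous; have hvc := hv.continuous; fun_prop
  rw [← integral_eq_sub_of_hasDerivAt (fun x _ => hasDerivAt_wronskian hu hv x)
    (hcont.intervalIntegrable a b)]
  refine integral_congr fun x hx => ?_
  rw [uIcc_of_le hab] at hx
  linear_combination v x * hpu x hx - u x * hqv x hx

theorem mul_integral_add_mul_integral_eq_zero_of_wronskian_eq {w : ℝ → ℝ} {R R' k k' : ℝ}
    (hab : a ≤ b) (hw : Continuous w) (hu : ContDiff ℝ 2 u) (hv : ContDiff ℝ 2 v)
    (hRu : ∀ x ∈ Icc a b, deriv (deriv u) x + (R - k * w x) * u x = 0)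
    (hRv : ∀ x ∈ Icc a b, deriv (deriv v) x + (R' - k' * w x) * v x = 0)
    (hW : wronskian u v a = wronskian u v b) :
    (R - R') * (∫ x in a..b, u x * v x) + (k' - k) * ∫ x in a..b, w x * (u x * v x) = 0 := by
  have huv : Continuous fun x => u x * v x := hu.continuous.mul hv.continuous
  have hwuv : Continuous fun x => w x * (u x * v x) := hw.mul huv
  calc _ = ∫ x in a..b, ((R - R') * (u x * v x) + (k' - k) * (w x * (u x * v x))) := by
        rw [integral_add ((huv.intervalIntegrable a b).const_mul _)
          ((hwuv.intervalIntegrable a b).const_mul _), integral_const_mul, integral_const_mul]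
    _ = ∫ x in a..b, ((R - k * w x) - (R' - k' * w x)) * (u x * v x) :=
        integral_congr fun x _ => by ring
    _ = 0 := by rw [integral_sub_mul_mul_eq_wronskian_sub hab hu hv hRu hRv, hW, sub_self]

theorem integral_deriv_sq_add_mul_integral_sq {s : ℝ} (hab : a ≤ b) (hu : ContDiff ℝ 2 u)
    (hsu : ∀ x ∈ Icc a b, deriv (deriv u) x = s * u x) :
    (∫ x in a..b, deriv u x ^ 2) + s * ∫ x in a..b, u x ^ 2 =
      deriv u b * u b - deriv u a * u a := by
  have hparts := integral_mul_deriv_eq_deriv_mul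
    (fun x _ => (hu.differentiable_deriv_two x).hasDerivAt)
    (fun x _ => (hu.differentiable two_ne_zero x).hasDerivAt)
    ((hu.deriv' (n := 1)).continuous_deriv_one.intervalIntegrable a b)
    ((hu.continuous_deriv one_le_two).intervalIntegrable a b)
  have hsu' : ∫ x in a..b, deriv (deriv u) x * u x = s * ∫ x in a..b, u x ^ 2 := by
    rw [← integral_const_mul]
    refine integral_congr fun x hx => ?_
    rw [uIcc_of_le hab] at hx
    simp only [hsu x hx]
    ring
  simp only [← sq] at hparts
  rw [hparts, hsu']
  ring

theorem eqOn_zero_of_deriv_deriv_eq_pos_mul {s : ℝ} (hab : a < b) (hs : 0 < s)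
    (hu : ContDiff ℝ 2 u) (hsu : ∀ x ∈ Icc a b, deriv (deriv u) x = s * u x)
    (hbdry : deriv u b * u b = deriv u a * u a) : ∀ x ∈ Icc a b, u x = 0 := by
  have henergy := integral_deriv_sq_add_mul_integral_sq hab.le hu hsu
  have hu' : 0 ≤ ∫ x in a..b, deriv u x ^ 2 := integral_nonneg hab.le fun x _ => sq_nonneg _
  have hu0 : 0 ≤ ∫ x in a..b, u x ^ 2 := integral_nonneg hab.le fun x _ => sq_nonneg _
  refine eqOn_zero_of_integral_sq_eq_zero hab hu.continuous.continuousOn (le_antisymm ?_ hu0)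
  nlinarith

theorem eqOn_zero_of_deriv_deriv_eq_nonneg_mul {s : ℝ} (hab : a < b) (hs : 0 ≤ s)
    (hu : ContDiff ℝ 2 u) (hsu : ∀ x ∈ Icc a b, deriv (deriv u) x = s * u x)
    (ha : deriv u a * u a = 0) (hb : u b = 0) : ∀ x ∈ Icc a b, u x = 0 := by
  have henergy := integral_deriv_sq_add_mul_integral_sq hab.le hu hsu
  rw [hb, mul_zero, ha, sub_zero] at henergy
  have hu' : 0 ≤ ∫ x in a..b, deriv u x ^ 2 := integral_nonneg hab.le fun x _ => sq_nonneg _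
  have hu0 : 0 ≤ ∫ x in a..b, u x ^ 2 := integral_nonneg hab.le fun x _ => sq_nonneg _
  have hderiv := eqOn_zero_of_integral_sq_eq_zero hab
    (hu.continuous_deriv one_le_two).continuousOn
    (le_antisymm (by nlinarith [mul_nonneg hs hu0]) hu')
  intro x hx
  have hftc := integral_deriv_eq_sub (fun y _ => hu.differentiable two_ne_zero y)
    ((hu.continuous_deriv one_le_two).intervalIntegrable x b)
  rw [integral_congr (g := fun _ => 0) fun y hy =>
    hderiv y (uIcc_subset_Icc hx (right_mem_Icc.2 hab.le) hy), integral_zero, hb] at hftc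
  linarith

end SecondOrder

theorem eqOn_zero_or_eqOn_zero_of_deriv_deriv_eq {P Q : ℝ → ℝ} {R T ϑ : ℝ} (hT : 0 < T)
    (hϑ : 0 < ϑ) (hP : ContDiff ℝ 2 P) (hPper : Function.Periodic P T)
    (hPR : ∀ x ∈ Icc 0 T, deriv (deriv P) x = -R * P x) (hQ : ContDiff ℝ 2 Q)
    (hQR : ∀ x ∈ Icc 0 ϑ, deriv (deriv Q) x = R * Q x) (hQ0 : deriv Q 0 * Q 0 = 0)
    (hQϑ : Q ϑ = 0) : (∀ x ∈ Icc 0 T, P x = 0) ∨ ∀ x ∈ Icc 0 ϑ, Q x = 0 := by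
  rcases le_or_gt 0 R with hR | hR
  · exact .inr (eqOn_zero_of_deriv_deriv_eq_nonneg_mul hϑ hR hQ hQR hQ0 hQϑ)
  · exact .inl (eqOn_zero_of_deriv_deriv_eq_pos_mul hT (neg_pos.2 hR) hP hPR
      (by rw [hPper.eq, hPper.deriv.eq]))

/-- orthogonality of distinct simple modes of the elliptic membrane. -/
theorem elliptic_membrane_modes_orthogonal
    (c lam lam' R R' ϑ : ℝ) (hϑ : 0 < ϑ) (P Pt Q Qt : ℝ → ℝ)
    (hP : ContDiff ℝ 2 P) (hPt : ContDiff ℝ 2 Pt)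
    (hPper : Function.Periodic P (2 * π)) (hPtper : Function.Periodic Pt (2 * π))
    (hPode : ∀ α : ℝ,
      deriv (deriv P) α + (R - 2 * lam ^ 2 * c ^ 2 * Real.cos (2 * α)) * P α = 0)
    (hPtode : ∀ α : ℝ,
      deriv (deriv Pt) α + (R' - 2 * lam' ^ 2 * c ^ 2 * Real.cos (2 * α)) * Pt α = 0)
    (hQ : ContDiff ℝ 2 Q) (hQt : ContDiff ℝ 2 Qt)
    (hQode : ∀ β ∈ Set.Icc (0 : ℝ) ϑ,
      deriv (deriv Q) β - (R - 2 * lam ^ 2 * c ^ 2 * Real.cosh (2 * β)) * Q β = 0)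
    (hQtode : ∀ β ∈ Set.Icc (0 : ℝ) ϑ,
      deriv (deriv Qt) β - (R' - 2 * lam' ^ 2 * c ^ 2 * Real.cosh (2 * β)) * Qt β = 0)
    (hQϑ : Q ϑ = 0) (hQtϑ : Qt ϑ = 0)
    (hbc : (Q 0 = 0 ∧ Qt 0 = 0) ∨ (deriv Q 0 = 0 ∧ deriv Qt 0 = 0))
    (hne : ¬(lam ^ 2 = lam' ^ 2 ∧ R = R')) :
    ∫ β in (0 : ℝ)..ϑ, ∫ α in (0 : ℝ)..(2 * π),
      (Real.cosh (2 * β) - Real.cos (2 * α)) * P α * Pt α * Q β * Qt β = 0 := by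
  by_cases hdeg : R - R' = 0 ∧ 2 * lam' ^ 2 * c ^ 2 - 2 * lam ^ 2 * c ^ 2 = 0
  · obtain rfl : c = 0 := by
      by_contra hc
      refine hne ⟨mul_right_cancel₀ (pow_ne_zero 2 hc) ?_, sub_eq_zero.mp hdeg.1⟩
      linear_combination -hdeg.2 / 2
    refine integral_integral_eq_zero_of_forall_mem_Icc hϑ.le two_pi_pos.le fun β hβ α hα => ?_
    rcases eqOn_zero_or_eqOn_zero_of_deriv_deriv_eq two_pi_pos hϑ hP hPper
      (fun α _ => by linear_combination hPode α) hQ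
      (fun β hβ => by linear_combination hQode β hβ)
      (by rcases hbc with h | h <;> simp [h.1]) hQϑ with hP0 | hQ0
    · simp [hP0 α hα]
    · simp [hQ0 β hβ]
  have hPcross := mul_integral_add_mul_integral_eq_zero_of_wronskian_eq
    (w := fun α => cos (2 * α))
    two_pi_pos.le (by fun_prop) hP hPt (fun α _ => hPode α) (fun α _ => hPtode α)
    (hPper.wronskian hPtper).eq.symm
  have hQcross := mul_integral_add_mul_integral_eq_zero_of_wronskian_eq
    (w := fun β => cosh (2 * β))
    (R := -R) (R' := -R') (k := -(2 * lam ^ 2 * c ^ 2)) (k' := -(2 * lam' ^ 2 * c ^ 2))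
    hϑ.le (by fun_prop) hQ hQt (fun β hβ => by linear_combination hQode β hβ)
    (fun β hβ => by linear_combination hQtode β hβ)
    (by rcases hbc with h | h <;> simp [wronskian, h, hQϑ, hQtϑ])
  have hPc := hP.continuous; have hPtc := hPt.continuous
  have hQc := hQ.continuous; have hQtc := hQt.continuous
  have hsep := integral_integral_sub_mul_mul (f := fun α => cos (2 * α))
    (g := fun β => cosh (2 * β)) (u := fun α => P α * Pt α) (v := fun β => Q β * Qt β)
    (a := 0) (b := ϑ) (c := 0) (d := 2 * π)
    (Continuous.intervalIntegrable (by fun_prop) _ _)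
    (Continuous.intervalIntegrable (by fun_prop) _ _)
    (Continuous.intervalIntegrable (by fun_prop) _ _)
    (Continuous.intervalIntegrable (by fun_prop) _ _)
  simp only [mul_assoc] at hsep ⊢
  rw [hsep]
  exact mul_sub_mul_eq_zero_of_mul_add_mul_eq_zero hPcross (by linear_combination -hQcross)
    (not_and_or.mp hdeg)
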